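/- arXiv:1109.3723 — 2 statements merged into one kernel-verified Lean document; each statement's English description precedes it below -/
import Mathlib

section
/- Let m ≥ 2 be an integer and let 0 → A → B → C → 0 be a short exact sequence of finite m-torsion abelian groups. If A or C is isomorphic to (ℤ/mℤ)^n for some n, then rk_m(B) = rk_m(A) + rk_m(C). -/
/-!
If `A ≅ (ℤ/m)^n` the sequence splits because `ℤ/m` is self-injective (Baer's criterion: for
principal ideals, `ann d ⊆ ann y` forces `d ∣ y` by a gcd computation); if `C ≅ (ℤ/m)^n` it
splits because free modules are projective. Hence `B ≅ (ℤ/m)^n × D` with `D = C` or `D = A`,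
and it remains to show `rk_m((ℤ/m)^n × D) = n + rk_m(D)`. Peeling off one factor at a time, the
nontrivial inequality reduces to: a linear functional on `(ℤ/m)^(t+1)` vanishes on a copy of
`(ℤ/m)^t`. This holds because `ℤ/m` is a Hermite ring (every pair `(a, b)` is proportional to a
unimodular pair `(a', b')`), so a unimodular change of two coordinates moves a kernel vector
onto a basis vector, and induction on `t` finishes.
-/

/-- The `m`-rank of an abelian group: the largest `r` such that `(ℤ/mℤ)^r`
embeds into `G`. -/
noncomputable def mrank (m : ℕ) (G : Type*) [AddCommGroup G] : ℕ :=
  sSup {r : ℕ | ∃ f : (Fin r → ZMod m) →+ G, Function.Injective f}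

open Function

section Splitting

variable {R A B C : Type*} [Ring R] [AddCommGroup A] [AddCommGroup B] [AddCommGroup C]
  [Module R A] [Module R B] [Module R C] {f : A →ₗ[R] B} {g : B →ₗ[R] C}

theorem Function.Exact.nonempty_linearEquiv_prod_of_baer (h : Exact f g) (hf : Injective f)
    (hg : Surjective g) (hA : Module.Baer R A) : Nonempty (B ≃ₗ[R] A × C) :=
  have ⟨r, hr⟩ := hA.extension_property f hf LinearMap.id
  ⟨(h.splitInjectiveEquiv hg ⟨r, hr⟩).1⟩

theorem Function.Exact.nonempty_linearEquiv_prod_of_projective [Module.Projective R C]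
    (h : Exact f g) (hf : Injective f) (hg : Surjective g) : Nonempty (B ≃ₗ[R] A × C) :=
  have ⟨s, hs⟩ := Module.projective_lifting_property g LinearMap.id hg
  ⟨(h.splitSurjectiveEquiv hf ⟨s, hs⟩).1⟩

end Splitting

namespace ZMod

variable {m : ℕ}

theorem dvd_of_forall_mul_eq_zero_imp [NeZero m] {d y : ZMod m}
    (h : ∀ x : ZMod m, x * d = 0 → x * y = 0) : d ∣ y := by
  obtain ⟨δ, rfl⟩ := intCast_surjective d
  obtain ⟨Y, rfl⟩ := intCast_surjective y
  obtain ⟨k, hmk⟩ := Int.gcd_dvd_right δ m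
  obtain ⟨δ', hδ'⟩ := Int.gcd_dvd_left δ m
  have hk : k ≠ 0 := by
    rintro rfl
    rw [mul_zero] at hmk
    exact NeZero.ne m (by exact_mod_cast hmk)
  have hkδ : (k : ZMod m) * δ = 0 := by
    rw [← Int.cast_mul, intCast_zmod_eq_zero_iff_dvd]
    exact ⟨δ', by linear_combination k * hδ' - δ' * hmk⟩
  have hgY : (δ.gcd m : ℤ) ∣ Y := by
    have := h _ hkδ
    rw [← Int.cast_mul, intCast_zmod_eq_zero_iff_dvd] at this
    nth_rw 1 [hmk] at this
    exact (mul_dvd_mul_iff_right hk).mp (by simpa [mul_comm] using this)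
  have hbezout : ((δ.gcd m : ℤ) : ZMod m) = δ * (δ.gcdA m : ZMod m) := by
    simpa using congrArg (Int.cast : ℤ → ZMod m) (Int.gcd_eq_gcd_ab δ m)
  exact (Dvd.intro _ hbezout.symm).trans (Int.cast_dvd_cast _ _ hgY)

theorem baer_self [NeZero m] : Module.Baer (ZMod m) (ZMod m) := by
  intro I g
  have : IsPrincipalIdealRing (ZMod m) := .of_surjective (Int.castRingHom _) intCast_surjective
  obtain ⟨d, rfl⟩ := (IsPrincipalIdealRing.principal I).principal
  have hd : d ∈ Ideal.span {d} := Ideal.mem_span_singleton_self d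
  obtain ⟨z, hz⟩ : d ∣ g ⟨d, hd⟩ := dvd_of_forall_mul_eq_zero_imp fun x hx => by
    rw [← smul_eq_mul, ← map_smul]
    convert map_zero g
    exact Subtype.ext hx
  refine ⟨LinearMap.mulRight _ z, fun x hx => ?_⟩
  obtain ⟨c, rfl⟩ := Ideal.mem_span_singleton'.mp hx
  have : (⟨c * d, hx⟩ : Ideal.span {d}) = c • ⟨d, hd⟩ := rfl
  rw [this, map_smul, hz, LinearMap.mulRight_apply, smul_eq_mul, mul_assoc]

instance injective_self [NeZero m] : Module.Injective (ZMod m) (ZMod m) :=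
  baer_self.injective

theorem exists_isCoprime_mul_eq (a b : ZMod m) :
    ∃ a' b' : ZMod m, IsCoprime a' b' ∧ a * b' = b * a' := by
  obtain ⟨A, rfl⟩ := intCast_surjective a
  obtain ⟨B, rfl⟩ := intCast_surjective b
  rcases Nat.eq_zero_or_pos (Int.gcd A B) with hAB | hAB
  · obtain ⟨rfl, rfl⟩ := Int.gcd_eq_zero_iff.mp hAB
    exact ⟨1, 0, isCoprime_one_left, by simp⟩
  obtain ⟨G, A', B', -, hcop, rfl, rfl⟩ := Int.exists_gcd_one' hAB
  refine ⟨A', B', (Int.isCoprime_iff_gcd_eq_one.mpr hcop).intCast, ?_⟩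
  push_cast
  ring

end ZMod

section Functional

variable {R M N : Type*} [CommRing R] [AddCommGroup M] [Module R M] [AddCommGroup N] [Module R N]

theorem LinearMap.exists_injective_apply_one_zero_eq_zero (l : R × R × N →ₗ[R] R) {a' b' : R}
    (hcop : IsCoprime a' b') (h : l (1, 0, 0) * b' = l (0, 1, 0) * a') :
    ∃ σ : R × R × N →ₗ[R] R × R × N, Injective σ ∧ l (σ (1, 0)) = 0 := by
  obtain ⟨u, v, huv⟩ := hcop
  -- `(c, s) ↦ !![b', u; -a', v] *ᵥ ![c, s]`, a matrix of determinant `1`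
  let σ : R × R × N →ₗ[R] R × R × N :=
    { toFun := fun z => (z.1 * b' + z.2.1 * u, -(z.1 * a') + z.2.1 * v, z.2.2)
      map_add' := fun z w => by ext <;> simp only [Prod.fst_add, Prod.snd_add] <;> ring
      map_smul' := fun r z => by
        ext <;> simp only [Prod.smul_fst, Prod.smul_snd, smul_eq_mul, RingHom.id_apply] <;> ring }
  refine ⟨σ, (injective_iff_map_eq_zero σ).mpr fun ⟨c, s, x⟩ hz => ?_, ?_⟩
  · simp only [σ, LinearMap.coe_mk, AddHom.coe_mk, Prod.mk_eq_zero] at hz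
    obtain ⟨h₁, h₂, rfl⟩ := hz
    have hc : c = 0 := by linear_combination v * h₁ - u * h₂ - c * huv
    have hs : s = 0 := by linear_combination a' * h₁ + b' * h₂ - s * huv
    simp [hc, hs]
  · have : σ (1, 0) = b' • (1, 0, 0) + (-a') • ((0, 1, 0) : R × R × N) := by simp [σ]
    rw [this, map_add, map_smul, map_smul, smul_eq_mul, smul_eq_mul]
    linear_combination h

theorem LinearMap.exists_injective_comp_eq_zero_prod_succ
    (hR : ∀ a b : R, ∃ a' b' : R, IsCoprime a' b' ∧ a * b' = b * a')
    (e : (R × N) ≃ₗ[R] M)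
    (hN : ∀ l : R × N →ₗ[R] R, ∃ ι : N →ₗ[R] R × N, Injective ι ∧ l ∘ₗ ι = 0)
    (l : R × M →ₗ[R] R) : ∃ ι : M →ₗ[R] R × M, Injective ι ∧ l ∘ₗ ι = 0 := by
  let P : R × R × N →ₗ[R] R × M := LinearMap.id.prodMap e.toLinearMap
  let L := l ∘ₗ P
  obtain ⟨a', b', hcop, hab⟩ := hR (L (1, 0, 0)) (L (0, 1, 0))
  obtain ⟨σ, hσ, hσL⟩ := L.exists_injective_apply_one_zero_eq_zero hcop hab
  obtain ⟨ι', hι', hι'L⟩ := hN (L ∘ₗ σ ∘ₗ LinearMap.inr R R (R × N))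
  refine ⟨P ∘ₗ σ ∘ₗ LinearMap.id.prodMap ι' ∘ₗ e.symm.toLinearMap, ?_, LinearMap.ext fun y => ?_⟩
  · exact (Prod.map_injective.mpr ⟨injective_id, e.injective⟩).comp
      (hσ.comp ((Prod.map_injective.mpr ⟨injective_id, hι'⟩).comp e.symm.injective))
  · obtain ⟨⟨c, x⟩, rfl⟩ := e.surjective y
    have hsplit : ((c, ι' x) : R × R × N) = c • (1, 0) + (0, ι' x) := by simp
    simp only [LinearMap.comp_apply, LinearEquiv.coe_coe, LinearEquiv.symm_apply_apply,
      LinearMap.prodMap_apply, LinearMap.id_apply, LinearMap.zero_apply]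
    change L (σ (c, ι' x)) = 0
    rw [hsplit, map_add, map_add, map_smul, map_smul, hσL, smul_zero, zero_add]
    exact LinearMap.congr_fun hι'L x

theorem LinearMap.exists_injective_comp_eq_zero_pi
    (hR : ∀ a b : R, ∃ a' b' : R, IsCoprime a' b' ∧ a * b' = b * a') {t : ℕ}
    (l : R × (Fin t → R) →ₗ[R] R) :
    ∃ ι : (Fin t → R) →ₗ[R] R × (Fin t → R), Injective ι ∧ l ∘ₗ ι = 0 := by
  induction t with
  | zero => exact ⟨0, injective_of_subsingleton _, LinearMap.comp_zero l⟩
  | succ t ih =>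
    exact exists_injective_comp_eq_zero_prod_succ hR (Fin.consLinearEquiv R fun _ => R) ih l

end Functional

section mrank

variable {m : ℕ} {G H : Type*} [AddCommGroup G] [AddCommGroup H]

theorem mrank_congr (e : G ≃+ H) : mrank m G = mrank m H := by
  unfold mrank
  congr 1
  ext r
  exact ⟨fun ⟨φ, hφ⟩ => ⟨e.toAddMonoidHom.comp φ, e.injective.comp hφ⟩,
    fun ⟨φ, hφ⟩ => ⟨e.symm.toAddMonoidHom.comp φ, e.symm.injective.comp hφ⟩⟩

theorem bddAbove_setOf_injective (hm : 1 < m) [Finite G] :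
    BddAbove {r : ℕ | ∃ f : (Fin r → ZMod m) →+ G, Injective f} := by
  have : NeZero m := ⟨by omega⟩
  refine ⟨Nat.card G, fun r ⟨φ, hφ⟩ => ?_⟩
  calc r ≤ m ^ r := (Nat.lt_pow_self hm).le
    _ = Nat.card (Fin r → ZMod m) := by simp
    _ ≤ Nat.card G := Nat.card_le_card_of_injective φ hφ

theorem le_mrank (hm : 1 < m) [Finite G] {r : ℕ} {φ : (Fin r → ZMod m) →+ G}
    (hφ : Injective φ) : r ≤ mrank m G :=
  le_csSup (bddAbove_setOf_injective hm) ⟨φ, hφ⟩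

theorem exists_injective_pi_mrank (hm : 1 < m) [Finite G] :
    ∃ φ : (Fin (mrank m G) → ZMod m) →+ G, Injective φ :=
  Nat.sSup_mem ⟨0, show ∃ φ : (Fin 0 → ZMod m) →+ G, Injective φ from
    ⟨0, injective_of_subsingleton _⟩⟩ (bddAbove_setOf_injective hm)

theorem mrank_pi (hm : 1 < m) (n : ℕ) : mrank m (Fin n → ZMod m) = n := by
  have : NeZero m := ⟨by omega⟩
  refine le_antisymm (csSup_le' fun r hr => ?_) (le_mrank hm (φ := .id _) injective_id)
  obtain ⟨φ, hφ⟩ := hr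
  have := Nat.card_le_card_of_injective φ hφ
  simp only [Nat.card_fun, Nat.card_zmod, Nat.card_fin] at this
  exact (Nat.pow_le_pow_iff_right hm).mp this

theorem mrank_add_mrank_le_mrank_prod (hm : 1 < m) [Finite G] [Finite H] :
    mrank m G + mrank m H ≤ mrank m (G × H) := by
  obtain ⟨φ, hφ⟩ := exists_injective_pi_mrank (G := G) hm
  obtain ⟨ψ, hψ⟩ := exists_injective_pi_mrank (G := H) hm
  let e : (Fin (mrank m G + mrank m H) → ZMod m) ≃ₗ[ℤ]
      (Fin (mrank m G) → ZMod m) × (Fin (mrank m H) → ZMod m) :=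
    (LinearEquiv.funCongrLeft ℤ (ZMod m) finSumFinEquiv).trans
      (LinearEquiv.sumArrowLequivProdArrow _ _ ℤ (ZMod m))
  exact le_mrank hm (φ := (φ.prodMap ψ).comp e.toAddEquiv.toAddMonoidHom)
    ((Prod.map_injective.mpr ⟨hφ, hψ⟩).comp e.injective)

theorem mrank_zmod_prod_le (hm : 1 < m) [Finite G] : mrank m (ZMod m × G) ≤ mrank m G + 1 := by
  refine csSup_le' fun r hr => ?_
  obtain ⟨φ, hφ⟩ := hr
  obtain _ | t := r
  · exact Nat.zero_le _
  let E := (Fin.consLinearEquiv (ZMod m) fun _ : Fin (t + 1) => ZMod m).toAddEquiv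
  obtain ⟨ι, hι, hιl⟩ :=
    LinearMap.exists_injective_comp_eq_zero_pi ZMod.exists_isCoprime_mul_eq
      (((AddMonoidHom.fst _ _).comp (φ.comp E.toAddMonoidHom)).toZModLinearMap m)
  let ψ := φ.comp (E.toAddMonoidHom.comp ι.toAddMonoidHom)
  have hψ : Injective ψ := hφ.comp (E.injective.comp hι)
  refine Nat.succ_le_succ (le_mrank hm (φ := (AddMonoidHom.snd _ _).comp ψ)
    ((injective_iff_map_eq_zero _).mpr fun x hx => (injective_iff_map_eq_zero ψ).mp hψ x ?_))
  exact Prod.ext (LinearMap.congr_fun hιl x) hx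

theorem mrank_pi_prod (hm : 1 < m) [Finite G] (n : ℕ) :
    mrank m ((Fin n → ZMod m) × G) = n + mrank m G := by
  have : NeZero m := ⟨by omega⟩
  induction n with
  | zero => rw [mrank_congr AddEquiv.uniqueProd, zero_add]
  | succ n ih =>
    refine le_antisymm ?_ ?_
    · let e : (Fin (n + 1) → ZMod m) × G ≃+ ZMod m × ((Fin n → ZMod m) × G) :=
        ((Fin.consLinearEquiv ℤ fun _ => ZMod m).toAddEquiv.symm.prodCongr (.refl G)).trans
          AddEquiv.prodAssoc
      rw [mrank_congr e]
      linarith [mrank_zmod_prod_le hm (G := (Fin n → ZMod m) × G)]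
    · calc n + 1 + mrank m G = mrank m (Fin (n + 1) → ZMod m) + mrank m G := by rw [mrank_pi hm]
        _ ≤ _ := mrank_add_mrank_le_mrank_prod hm

theorem mrank_prod_of_addEquiv_pi (hm : 1 < m) [Finite H] {n : ℕ}
    (e : G ≃+ (Fin n → ZMod m)) :
    mrank m (G × H) = mrank m G + mrank m H := by
  rw [mrank_congr (e.prodCongr (.refl H)), mrank_pi_prod hm, mrank_congr e, mrank_pi hm]

theorem mrank_eq_mrank_add_mrank_of_exact {n : ℕ} (hm : 1 < m) {A B C : Type*}
    [AddCommGroup A] [AddCommGroup B] [AddCommGroup C] [Module (ZMod m) A] [Module (ZMod m) B]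
    [Module (ZMod m) C] [Finite A] [Finite C] {f : A →ₗ[ZMod m] B} {g : B →ₗ[ZMod m] C}
    (hfg : Exact f g) (hf : Injective f) (hg : Surjective g)
    (hiso : Nonempty (A ≃+ (Fin n → ZMod m)) ∨ Nonempty (C ≃+ (Fin n → ZMod m))) :
    mrank m B = mrank m A + mrank m C := by
  have : NeZero m := ⟨by omega⟩
  rcases hiso with ⟨⟨eA⟩⟩ | ⟨⟨eC⟩⟩
  · obtain ⟨e⟩ := hfg.nonempty_linearEquiv_prod_of_baer hf hg
      ((Module.Baer.of_injective inferInstance).of_equiv (eA.toLinearEquiv (ZMod.map_smul eA)).symm)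
    rw [mrank_congr e.toAddEquiv, mrank_prod_of_addEquiv_pi hm eA]
  · have : Module.Projective (ZMod m) C := .of_equiv' (eC.toLinearEquiv (ZMod.map_smul eC)).symm
    obtain ⟨e⟩ := hfg.nonempty_linearEquiv_prod_of_projective hf hg
    rw [mrank_congr (e.toAddEquiv.trans AddEquiv.prodComm), mrank_prod_of_addEquiv_pi hm eC,
      add_comm]

end mrank

theorem stmt3_general (m : ℕ) (hm : 2 ≤ m) (n : ℕ)
    (A B C : Type*) [AddCommGroup A] [AddCommGroup B] [AddCommGroup C]
    [Finite A] [Finite C]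
    (hA : ∀ a : A, m • a = 0) (hB : ∀ b : B, m • b = 0) (hC : ∀ c : C, m • c = 0)
    (f : A →+ B) (g : B →+ C)
    (hf : Function.Injective f) (hg : Function.Surjective g)
    (hexact : f.range = g.ker)
    (hiso : Nonempty (A ≃+ (Fin n → ZMod m)) ∨ Nonempty (C ≃+ (Fin n → ZMod m))) :
    mrank m B = mrank m A + mrank m C := by
  let _ := AddCommGroup.zmodModule hA
  let _ := AddCommGroup.zmodModule hB
  let _ := AddCommGroup.zmodModule hC
  exact mrank_eq_mrank_add_mrank_of_exact hm (f := f.toZModLinearMap m) (g := g.toZModLinearMap m)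
    (fun b => (SetLike.ext_iff.mp hexact b).symm) hf hg hiso

theorem stmt3 (m : ℕ) (hm : 2 ≤ m) (n : ℕ)
    (A B C : Type*) [AddCommGroup A] [AddCommGroup B] [AddCommGroup C]
    [Finite A] [Finite B] [Finite C]
    (hA : ∀ a : A, m • a = 0) (hB : ∀ b : B, m • b = 0) (hC : ∀ c : C, m • c = 0)
    (f : A →+ B) (g : B →+ C)
    (hf : Function.Injective f) (hg : Function.Surjective g)
    (hexact : f.range = g.ker)
    (hiso : Nonempty (A ≃+ (Fin n → ZMod m)) ∨ Nonempty (C ≃+ (Fin n → ZMod m))) :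
    mrank m B = mrank m A + mrank m C :=
  stmt3_general m hm n A B C hA hB hC f g hf hg hexact hiso
end

section
/- Let K be a number field, S a finite set of finite places of K, m ≥ 2 an integer. There is an exact sequence 0 → O_{K,S}^×/(O_{K,S}^×)^m → H → Cl(O_{K,S})[m] → 0, where H is the subgroup of K^×/(K^×)^m consisting of classes z with v_𝔭(z) ≡ 0 (mod m) for all finite places 𝔭 ∉ S, O_{K,S} is the ring of S-integers, and Cl(O_{K,S})[m] is the m-torsion of its class group. In particular the map H → Cl(O_{K,S})[m] sending the class of z to the class of the ideal 𝔞 with 𝔞^m = (z)·(S-part) is surjective with kernel the image of the S-units. -/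
open IsDedekindDomain FractionalIdeal NumberField
open scoped Multiplicative nonZeroDivisors

/-- `v_𝔭(z) ≡ 0 (mod m)` for every height-one prime `𝔭` of `A`.  When `A` is the
ring of `S`-integers of a number field `K`, the height-one primes of `A` are
exactly the finite places of `K` not in `S`, so this says that the class of `z`
in `K^×/(K^×)^m` lies in the subgroup `H`. -/
def AllValsDivisible (A : Type*) {K : Type*} [CommRing A] [IsDedekindDomain A] [Field K]
    [Algebra A K] [IsFractionRing A K] (m : ℕ) (z : Kˣ) : Prop :=
  ∀ v : HeightOneSpectrum A, ∃ n : ℤ,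
    v.valuation K (z : K) = ((Multiplicative.ofAdd (m * n) : Multiplicative ℤ) : WithZero (Multiplicative ℤ))

/-! The nonzero fractional ideals of a Dedekind domain form the free abelian group on its
primes, with coordinates `count K v`, and `v(z) = -count K v (z)`. Hence `(z)` has an `m`-th
root `𝔞` exactly when `m` divides every valuation of `z`, and this root is unique. If moreover
`𝔞 = (w)` is principal, then `(z) = (w ^ m)`, so `z / w ^ m` is a unit of `A`. -/

namespace FractionalIdeal

variable {R K : Type*} [CommRing R] [Field K] [Algebra R K] [IsFractionRing R K]

theorem spanSingleton_eq_spanSingleton_iff_exists_unit [IsDomain R] {x y : K} :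
    spanSingleton R⁰ x = spanSingleton R⁰ y ↔ ∃ u : Rˣ, x = algebraMap R K u * y := by
  rw [spanSingleton_eq_spanSingleton]
  refine ⟨fun ⟨u, hu⟩ => ⟨u⁻¹, ?_⟩, fun ⟨u, hu⟩ => ⟨u⁻¹, ?_⟩⟩
  · rw [← hu, ← Algebra.smul_def, ← Units.smul_def, inv_smul_smul]
  · rw [hu, Units.smul_def, Algebra.smul_def, ← mul_assoc, ← map_mul, Units.inv_mul, map_one,
      one_mul]

variable [IsDedekindDomain R]

theorem eq_of_count_eq {I J : FractionalIdeal R⁰ K} (hI : I ≠ 0) (hJ : J ≠ 0)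
    (h : ∀ v : HeightOneSpectrum R, count K v I = count K v J) : I = J := by
  rw [← finprod_heightOneSpectrum_factorization' (K := K) hI,
    ← finprod_heightOneSpectrum_factorization' (K := K) hJ]
  simp only [h]

theorem pow_left_injective {m : ℕ} (hm : m ≠ 0) :
    Function.Injective fun I : FractionalIdeal R⁰ K => I ^ m := by
  intro I J h
  simp only at h
  by_cases hI : I = 0
  · rw [hI, zero_pow hm, eq_comm, pow_eq_zero_iff hm] at h
    rw [hI, h]
  have hJ : J ≠ 0 := fun hJ => hI <| by rwa [hJ, zero_pow hm, pow_eq_zero_iff hm] at h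
  refine eq_of_count_eq hI hJ fun v => ?_
  have := congr_arg (count K v) h
  rw [count_pow, count_pow] at this
  exact mul_left_cancel₀ (Int.natCast_ne_zero.mpr hm) this

theorem exists_pow_eq_of_dvd_count {m : ℕ} {I : FractionalIdeal R⁰ K} (hI : I ≠ 0)
    (h : ∀ v : HeightOneSpectrum R, (m : ℤ) ∣ count K v I) :
    ∃ J : (FractionalIdeal R⁰ K)ˣ, (J : FractionalIdeal R⁰ K) ^ m = I := by
  have hfin : ∀ᶠ v : HeightOneSpectrum R in Filter.cofinite, count K v I / m = 0 := by
    filter_upwards [finite_factors I] with v hv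
    rw [hv, Int.zero_ediv]
  let e : HeightOneSpectrum R →₀ ℤ :=
    ⟨hfin.toFinset, fun v => count K v I / m, fun _ => hfin.mem_toFinset⟩
  let J : FractionalIdeal R⁰ K := e.prod (HeightOneSpectrum.asIdeal · ^ ·)
  have hJ : J ≠ 0 := Finset.prod_ne_zero_iff.mpr fun v _ =>
    zpow_ne_zero _ (coeIdeal_ne_zero.mpr v.ne_bot)
  refine ⟨Units.mk0 J hJ, eq_of_count_eq (pow_ne_zero _ hJ) hI fun v => ?_⟩
  rw [Units.val_mk0, count_pow, count_finsuppProd]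
  exact Int.mul_ediv_cancel' (h v)

end FractionalIdeal

namespace IsDedekindDomain.HeightOneSpectrum

variable {R K : Type*} [CommRing R] [IsDedekindDomain R] [Field K] [Algebra R K]
  [IsFractionRing R K]

theorem valuation_eq_exp_neg_count (v : HeightOneSpectrum R) {z : K} (hz : z ≠ 0) :
    v.valuation K z = WithZero.exp (-count K v (spanSingleton R⁰ z)) := by
  obtain ⟨⟨n, d⟩, rfl⟩ := IsLocalization.mk'_surjective R⁰ z
  have hn : n ≠ 0 := by
    rintro rfl
    simp at hz
  have hspan : spanSingleton R⁰ (IsLocalization.mk' K n d) =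
      spanSingleton R⁰ (algebraMap R K d)⁻¹ * (Ideal.span {n} : Ideal R) := by
    rw [coeIdeal_span_singleton, spanSingleton_mul_spanSingleton, IsFractionRing.mk'_eq_div,
      div_eq_inv_mul]
  rw [count_well_defined K v (spanSingleton_ne_zero_iff.mpr hz) hspan, v.valuation_of_mk',
    v.intValuation_if_neg hn, v.intValuation_if_neg (nonZeroDivisors.coe_ne_zero d),
    ← WithZero.exp_sub]
  ring_nf

end IsDedekindDomain.HeightOneSpectrum

section AllValsDivisible

variable {R K : Type*} [CommRing R] [IsDedekindDomain R] [Field K] [Algebra R K]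
  [IsFractionRing R K] {m : ℕ}

theorem allValsDivisible_iff_dvd_count {z : Kˣ} :
    AllValsDivisible R m z ↔
      ∀ v : HeightOneSpectrum R, (m : ℤ) ∣ count K v (spanSingleton R⁰ (z : K)) := by
  refine forall_congr' fun v => ?_
  change (∃ n : ℤ, v.valuation K (z : K) = WithZero.exp (m * n)) ↔ _
  simp only [v.valuation_eq_exp_neg_count z.ne_zero, WithZero.exp_inj, neg_eq_iff_eq_neg,
    ← mul_neg]
  exact ⟨fun ⟨n, hn⟩ => ⟨-n, hn⟩, fun ⟨n, hn⟩ => ⟨-n, by rw [neg_neg, hn]⟩⟩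

theorem allValsDivisible_iff_exists_pow_eq_spanSingleton {z : Kˣ} :
    AllValsDivisible R m z ↔
      ∃ I : (FractionalIdeal R⁰ K)ˣ,
        (I : FractionalIdeal R⁰ K) ^ m = spanSingleton R⁰ (z : K) := by
  rw [allValsDivisible_iff_dvd_count]
  refine ⟨exists_pow_eq_of_dvd_count (spanSingleton_ne_zero_iff.mpr z.ne_zero), ?_⟩
  rintro ⟨I, hI⟩ v
  exact ⟨count K v I, by rw [← hI, count_pow]⟩

end AllValsDivisible

namespace ClassGroup

variable {R K : Type*} [CommRing R] [IsDedekindDomain R] [Field K] [Algebra R K]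
  [IsFractionRing R K]

theorem mk_surjective :
    Function.Surjective (ClassGroup.mk K : (FractionalIdeal R⁰ K)ˣ → ClassGroup R) :=
  fun C => by
    obtain ⟨I, rfl⟩ := mk0_surjective C
    exact ⟨FractionalIdeal.mk0 K I, mk_mk0 K I⟩

theorem mk_eq_one_iff_exists_eq_spanSingleton {I : (FractionalIdeal R⁰ K)ˣ} :
    ClassGroup.mk K I = 1 ↔
      ∃ x : Kˣ, (I : FractionalIdeal R⁰ K) = spanSingleton R⁰ (x : K) := by
  rw [mk_eq_one_iff, isPrincipal_iff]
  refine ⟨fun ⟨x, hx⟩ => ⟨Units.mk0 x ?_, hx⟩, fun ⟨x, hx⟩ => ⟨x, hx⟩⟩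
  rintro rfl
  exact I.ne_zero (by rw [hx, spanSingleton_zero])

theorem mk_pow_eq_one_iff {I : (FractionalIdeal R⁰ K)ˣ} {m : ℕ} :
    ClassGroup.mk K I ^ m = 1 ↔
      ∃ z : Kˣ, (I : FractionalIdeal R⁰ K) ^ m = spanSingleton R⁰ (z : K) := by
  rw [← map_pow, mk_eq_one_iff_exists_eq_spanSingleton, Units.val_pow_eq_pow_val]

theorem mk_eq_one_iff_of_pow_eq_spanSingleton {I : (FractionalIdeal R⁰ K)ˣ} {m : ℕ}
    (hm : m ≠ 0) {z : Kˣ} (hI : (I : FractionalIdeal R⁰ K) ^ m = spanSingleton R⁰ (z : K)) :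
    ClassGroup.mk K I = 1 ↔
      ∃ (u : Rˣ) (w : Kˣ), (z : K) = algebraMap R K u * (w : K) ^ m := by
  rw [mk_eq_one_iff_exists_eq_spanSingleton, exists_comm]
  refine exists_congr fun w =>
    ⟨fun hw => ?_, fun hu => FractionalIdeal.pow_left_injective hm ?_⟩
  · rwa [hw, spanSingleton_pow, eq_comm, spanSingleton_eq_spanSingleton_iff_exists_unit] at hI
  · change (I : FractionalIdeal R⁰ K) ^ m = spanSingleton R⁰ (w : K) ^ m
    rw [hI, spanSingleton_pow]
    exact spanSingleton_eq_spanSingleton_iff_exists_unit.mpr hu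

end ClassGroup

theorem stmt7_general (K : Type*) [Field K] (m : ℕ) (hm : 2 ≤ m)
    -- `A` is the ring of `S`-integers `O_{K,S}` of `K`:
    (A : Type*) [CommRing A] [IsDedekindDomain A] [Algebra A K] [IsFractionRing A K] :
    -- well-definedness: for `z ∈ H` there is a unique `𝔞` with `𝔞^m = (z)`
    (∀ z : Kˣ, AllValsDivisible A m z →
      ∃! I : (FractionalIdeal A⁰ K)ˣ,
        (I : FractionalIdeal A⁰ K) ^ m = spanSingleton A⁰ (z : K)) ∧
    -- the map lands in the `m`-torsion `Cl(O_{K,S})[m]`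
    (∀ (z : Kˣ) (I : (FractionalIdeal A⁰ K)ˣ), AllValsDivisible A m z →
      (I : FractionalIdeal A⁰ K) ^ m = spanSingleton A⁰ (z : K) →
      (ClassGroup.mk (R := A) (K := K) I) ^ m = 1) ∧
    -- it is a group homomorphism
    (∀ (z₁ z₂ : Kˣ) (I₁ I₂ I₃ : (FractionalIdeal A⁰ K)ˣ),
      AllValsDivisible A m z₁ → AllValsDivisible A m z₂ →
      (I₁ : FractionalIdeal A⁰ K) ^ m = spanSingleton A⁰ (z₁ : K) →
      (I₂ : FractionalIdeal A⁰ K) ^ m = spanSingleton A⁰ (z₂ : K) →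
      (I₃ : FractionalIdeal A⁰ K) ^ m = spanSingleton A⁰ ((z₁ * z₂ : Kˣ) : K) →
      ClassGroup.mk (R := A) (K := K) I₃ = ClassGroup.mk (R := A) (K := K) I₁ * ClassGroup.mk (R := A) (K := K) I₂) ∧
    -- surjectivity onto `Cl(O_{K,S})[m]`
    (∀ C : ClassGroup A, C ^ m = 1 →
      ∃ (z : Kˣ) (I : (FractionalIdeal A⁰ K)ˣ), AllValsDivisible A m z ∧
        (I : FractionalIdeal A⁰ K) ^ m = spanSingleton A⁰ (z : K) ∧
        ClassGroup.mk (R := A) (K := K) I = C) ∧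
    -- the kernel is the image of the `S`-units `O_{K,S}^×/(O_{K,S}^×)^m`
    (∀ (z : Kˣ) (I : (FractionalIdeal A⁰ K)ˣ), AllValsDivisible A m z →
      (I : FractionalIdeal A⁰ K) ^ m = spanSingleton A⁰ (z : K) →
      (ClassGroup.mk (R := A) (K := K) I = 1 ↔
        ∃ (u : Aˣ) (w : Kˣ), (z : K) = algebraMap A K (u : A) * (w : K) ^ m)) := by
  have hm0 : m ≠ 0 := by omega
  refine ⟨fun z hz => ?_, fun z I _ hI => ClassGroup.mk_pow_eq_one_iff.mpr ⟨z, hI⟩,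
    fun z₁ z₂ I₁ I₂ I₃ _ _ h₁ h₂ h₃ => ?_, fun C hC => ?_,
    fun z I _ hI => ClassGroup.mk_eq_one_iff_of_pow_eq_spanSingleton hm0 hI⟩
  · obtain ⟨I, hI⟩ := allValsDivisible_iff_exists_pow_eq_spanSingleton.mp hz
    exact ⟨I, hI, fun J hJ =>
      Units.ext (FractionalIdeal.pow_left_injective hm0 (hJ.trans hI.symm))⟩
  · have hI₃ : I₃ = I₁ * I₂ := Units.ext <| FractionalIdeal.pow_left_injective hm0 <| by
      simp only [h₃, Units.val_mul, mul_pow, h₁, h₂, spanSingleton_mul_spanSingleton]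
    rw [hI₃, map_mul]
  · obtain ⟨I, rfl⟩ := ClassGroup.mk_surjective (K := K) C
    obtain ⟨z, hz⟩ := ClassGroup.mk_pow_eq_one_iff.mp hC
    exact ⟨z, I, allValsDivisible_iff_exists_pow_eq_spanSingleton.mpr ⟨I, hz⟩, hz, rfl⟩

/-- Kummer theory for the ring `O_{K,S}` of `S`-integers of a number field `K`:
there is an exact sequence
`0 → O_{K,S}^×/(O_{K,S}^×)^m → H → Cl(O_{K,S})[m] → 0`,
where `H ⊆ K^×/(K^×)^m` consists of the classes with `v_𝔭(z) ≡ 0 (mod m)` for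
all finite places `𝔭 ∉ S`, the map `H → Cl(O_{K,S})[m]` sending the class of
`z` to the class of the ideal `𝔞` with `𝔞^m = (z)` being surjective with kernel
the image of the `S`-units. -/
theorem stmt7 (K : Type*) [Field K] [NumberField K]
    (S : Finset (HeightOneSpectrum (𝓞 K))) (m : ℕ) (hm : 2 ≤ m)
    -- `A` is the ring of `S`-integers `O_{K,S}` of `K`:
    (A : Type*) [CommRing A] [IsDedekindDomain A] [Algebra A K] [IsFractionRing A K]
    (hA : ∀ x : K, x ∈ (algebraMap A K).range ↔
      ∀ v : HeightOneSpectrum (𝓞 K), v ∉ S → v.valuation K x ≤ 1) :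
    -- well-definedness: for `z ∈ H` there is a unique `𝔞` with `𝔞^m = (z)`
    (∀ z : Kˣ, AllValsDivisible A m z →
      ∃! I : (FractionalIdeal A⁰ K)ˣ,
        (I : FractionalIdeal A⁰ K) ^ m = spanSingleton A⁰ (z : K)) ∧
    -- the map lands in the `m`-torsion `Cl(O_{K,S})[m]`
    (∀ (z : Kˣ) (I : (FractionalIdeal A⁰ K)ˣ), AllValsDivisible A m z →
      (I : FractionalIdeal A⁰ K) ^ m = spanSingleton A⁰ (z : K) →
      (ClassGroup.mk (R := A) (K := K) I) ^ m = 1) ∧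
    -- it is a group homomorphism
    (∀ (z₁ z₂ : Kˣ) (I₁ I₂ I₃ : (FractionalIdeal A⁰ K)ˣ),
      AllValsDivisible A m z₁ → AllValsDivisible A m z₂ →
      (I₁ : FractionalIdeal A⁰ K) ^ m = spanSingleton A⁰ (z₁ : K) →
      (I₂ : FractionalIdeal A⁰ K) ^ m = spanSingleton A⁰ (z₂ : K) →
      (I₃ : FractionalIdeal A⁰ K) ^ m = spanSingleton A⁰ ((z₁ * z₂ : Kˣ) : K) →
      ClassGroup.mk (R := A) (K := K) I₃ = ClassGroup.mk (R := A) (K := K) I₁ * ClassGroup.mk (R := A) (K := K) I₂) ∧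
    -- surjectivity onto `Cl(O_{K,S})[m]`
    (∀ C : ClassGroup A, C ^ m = 1 →
      ∃ (z : Kˣ) (I : (FractionalIdeal A⁰ K)ˣ), AllValsDivisible A m z ∧
        (I : FractionalIdeal A⁰ K) ^ m = spanSingleton A⁰ (z : K) ∧
        ClassGroup.mk (R := A) (K := K) I = C) ∧
    -- the kernel is the image of the `S`-units `O_{K,S}^×/(O_{K,S}^×)^m`
    (∀ (z : Kˣ) (I : (FractionalIdeal A⁰ K)ˣ), AllValsDivisible A m z →
      (I : FractionalIdeal A⁰ K) ^ m = spanSingleton A⁰ (z : K) →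
      (ClassGroup.mk (R := A) (K := K) I = 1 ↔
        ∃ (u : Aˣ) (w : Kˣ), (z : K) = algebraMap A K (u : A) * (w : K) ^ m)) :=
  stmt7_general K m hm A
end
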